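/- arXiv:1602.08016 — 7 statements merged into one kernel-verified Lean document; each statement's English description precedes it below -/
import Mathlib

section
/- For every k₁ > 0 there exists a constant C > 0 such that for all j₁, j₂ ∈ {−1, 1} and all k, p ∈ ℝ with |p| ≤ k₁, k ≠ 0, p ≠ 0 and k − p ≠ 0, one has |−j₁·ω(k) − ω(p) + j₂·ω(k−p)| ≥ C. -/
/-- The dispersion relation ω(k) = sign(k)·√(1+k²) of the quasilinear Klein–Gordon
equation, with sign(0) = 0. -/
noncomputable def omega (k : ℝ) : ℝ := Real.sign k * Real.sqrt (1 + k ^ 2)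

namespace NonRes

noncomputable def f (x : ℝ) : ℝ := Real.sqrt (1 + x ^ 2)

lemma sq_f (x : ℝ) : (f x) ^ 2 = 1 + x ^ 2 := Real.sq_sqrt (by positivity)

lemma one_le_f (x : ℝ) : 1 ≤ f x := by
  have h : Real.sqrt 1 ≤ Real.sqrt (1 + x ^ 2) := Real.sqrt_le_sqrt (by nlinarith)
  simpa [f] using h

lemma abs_le_f (x : ℝ) : |x| ≤ f x := by
  have h : Real.sqrt (x ^ 2) ≤ Real.sqrt (1 + x ^ 2) := Real.sqrt_le_sqrt (by nlinarith)
  simpa [f, Real.sqrt_sq_eq_abs] using h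

lemma f_mono {x t : ℝ} (h : |x| ≤ t) : f x ≤ f t := by
  apply Real.sqrt_le_sqrt
  nlinarith [abs_nonneg x, sq_abs x]

lemma f_even (x : ℝ) : f (-x) = f x := by simp [f]

lemma f_le {t : ℝ} (ht : 0 ≤ t) : f t ≤ 1 + t := by
  rw [f, show (1:ℝ) + t = Real.sqrt ((1+t)^2) by rw [Real.sqrt_sq (by linarith)]]
  exact Real.sqrt_le_sqrt (by nlinarith)

lemma lip (x y : ℝ) : f (x + y) ≤ f x + |y| := by
  have h1 : 1 + (x + y) ^ 2 ≤ (f x + |y|) ^ 2 := by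
    have h2 := sq_f x
    have h3 := abs_le_f x
    have h4 : |x| * |y| ≤ f x * |y| := mul_le_mul_of_nonneg_right h3 (abs_nonneg y)
    have h5 : x * y ≤ |x| * |y| := by
      rw [← abs_mul]; exact le_abs_self _
    nlinarith [sq_abs y]
  calc f (x + y) ≤ Real.sqrt ((f x + |y|) ^ 2) := Real.sqrt_le_sqrt h1
    _ = f x + |y| := Real.sqrt_sq (by have := abs_nonneg y; have := one_le_f x; linarith)

lemma gap {x t : ℝ} (h : |x| ≤ t) : 1 / (f t + t) ≤ f x - |x| := by
  have h0 : 0 ≤ t := (abs_nonneg x).trans h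
  have h1 : (f x - |x|) * (f x + |x|) = 1 := by
    have := sq_f x
    have := sq_abs x
    nlinarith
  have hpos : 0 < f x + |x| := by
    have := one_le_f x; have := abs_nonneg x; linarith
  have h2 : f x - |x| = 1 / (f x + |x|) := by
    field_simp
    linarith [h1]
  rw [h2]
  apply one_div_le_one_div_of_le hpos
  have := f_mono h
  linarith

/-- Case helpers: C := 1/(f(k₁+1)+(k₁+1)). -/
lemma case_hi {k₁ k p : ℝ} (hk₁ : 0 < k₁) (hp : |p| ≤ k₁) :
    1 / (f (k₁+1) + (k₁+1)) ≤ f p + f (k - p) - f k := by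
  have l1 : f k ≤ f (k - p) + |p| := by
    have := lip (k - p) p
    simpa using this
  have := gap (show |p| ≤ k₁ + 1 by linarith)
  linarith

lemma case_lo {k₁ k p : ℝ} (hk₁ : 0 < k₁) (hp : |p| ≤ k₁) :
    1 / (f (k₁+1) + (k₁+1)) ≤ f k + f p - f (k - p) := by
  have l2 : f (k - p) ≤ f k + |p| := by
    have := lip k (-p)
    simpa [sub_eq_add_neg] using this
  have := gap (show |p| ≤ k₁ + 1 by linarith)
  linarith

lemma case_mid {k₁ k p : ℝ} (hk₁ : 0 < k₁) (hp : |p| ≤ k₁) :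
    1 / (f (k₁+1) + (k₁+1)) ≤ f k - f p + f (k - p) := by
  have hd : 1 ≤ f (k₁+1) + (k₁+1) := by
    have := one_le_f (k₁+1); linarith
  have hC1 : 1 / (f (k₁+1) + (k₁+1)) ≤ 1 := by
    rw [div_le_one (by linarith)]; linarith
  by_cases hk : |k| ≤ k₁ + 1
  · -- use f p ≤ f(k-p) + |k| and gap at k
    have l4 : f p ≤ f (k - p) + |k| := by
      have := lip (p - k) k
      rw [show p - k + k = p by ring] at this
      rw [show p - k = -(k - p) by ring, f_even] at this
      exact this
    have := gap hk
    linarith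
  · -- |k| large: f p ≤ f k₁ ≤ 1 + k₁ and f k ≥ |k|
    push_neg at hk
    have l5 : f p ≤ f k₁ := f_mono hp
    have l6 : f k₁ ≤ 1 + k₁ := f_le hk₁.le
    have := abs_le_f k
    have := one_le_f (k - p)
    linarith

lemma key (k₁ : ℝ) (hk₁ : 0 < k₁) (s1 s2 s3 : ℝ)
    (h1 : s1 = 1 ∨ s1 = -1) (h2 : s2 = 1 ∨ s2 = -1) (h3 : s3 = 1 ∨ s3 = -1)
    (k p : ℝ) (hp : |p| ≤ k₁) :
    1 / (f (k₁+1) + (k₁+1)) ≤ |s1 * f k + s2 * f p + s3 * f (k - p)| := by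
  have hd : 1 ≤ f (k₁+1) + (k₁+1) := by
    have := one_le_f (k₁+1); linarith
  have hC1 : 1 / (f (k₁+1) + (k₁+1)) ≤ 1 := by
    rw [div_le_one (by linarith)]; linarith
  have a1 := one_le_f k
  have a2 := one_le_f p
  have a3 := one_le_f (k - p)
  have hhi := case_hi (k := k) hk₁ hp
  have hlo := case_lo (k := k) hk₁ hp
  have hmid := case_mid (k := k) hk₁ hp
  rcases h1 with rfl | rfl <;> rcases h2 with rfl | rfl <;> rcases h3 with rfl | rfl <;>
    [ (have := le_abs_self (1 * f k + 1 * f p + 1 * f (k - p)); linarith);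
      (have := le_abs_self (1 * f k + 1 * f p + (-1) * f (k - p)); linarith);
      (have := le_abs_self (1 * f k + (-1) * f p + 1 * f (k - p)); linarith);
      (have := neg_le_abs (1 * f k + (-1) * f p + (-1) * f (k - p)); linarith);
      (have := le_abs_self ((-1) * f k + 1 * f p + 1 * f (k - p)); linarith);
      (have := neg_le_abs ((-1) * f k + 1 * f p + (-1) * f (k - p)); linarith);
      (have := neg_le_abs ((-1) * f k + (-1) * f p + 1 * f (k - p)); linarith);
      (have := neg_le_abs ((-1) * f k + (-1) * f p + (-1) * f (k - p)); linarith)]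

end NonRes

/-- Non-resonance condition. -/
theorem nonresonance (k₁ : ℝ) (hk₁ : 0 < k₁) :
    ∃ C > (0 : ℝ), ∀ j₁ j₂ : ℝ, (j₁ = 1 ∨ j₁ = -1) → (j₂ = 1 ∨ j₂ = -1) →
      ∀ k p : ℝ, |p| ≤ k₁ → k ≠ 0 → p ≠ 0 → k - p ≠ 0 →
        C ≤ |(-j₁) * omega k - omega p + j₂ * omega (k - p)| := by
  refine ⟨1 / (NonRes.f (k₁+1) + (k₁+1)), ?_, ?_⟩
  · apply div_pos one_pos
    have := NonRes.one_le_f (k₁+1); linarith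
  · intro j₁ j₂ hj₁ hj₂ k p hp hk hp0 hkp
    have hsk : Real.sign k = 1 ∨ Real.sign k = -1 := by
      rcases hk.lt_or_gt with h | h
      · right; exact Real.sign_of_neg h
      · left; exact Real.sign_of_pos h
    have hsp : Real.sign p = 1 ∨ Real.sign p = -1 := by
      rcases hp0.lt_or_gt with h | h
      · right; exact Real.sign_of_neg h
      · left; exact Real.sign_of_pos h
    have hskp : Real.sign (k - p) = 1 ∨ Real.sign (k - p) = -1 := by
      rcases hkp.lt_or_gt with h | h
      · right; exact Real.sign_of_neg h
      · left; exact Real.sign_of_pos h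
    have h1 : (-j₁) * Real.sign k = 1 ∨ (-j₁) * Real.sign k = -1 := by
      rcases hj₁ with rfl | rfl <;> rcases hsk with h | h <;> simp [h]
    have h2 : (-Real.sign p) = 1 ∨ (-Real.sign p) = -1 := by
      rcases hsp with h | h <;> simp [h]
    have h3 : j₂ * Real.sign (k - p) = 1 ∨ j₂ * Real.sign (k - p) = -1 := by
      rcases hj₂ with rfl | rfl <;> rcases hskp with h | h <;> simp [h]
    have hkey := NonRes.key k₁ hk₁ _ _ _ h1 h2 h3 k p hp
    have heq : ((-j₁) * Real.sign k) * NonRes.f k + (-Real.sign p) * NonRes.f p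
        + (j₂ * Real.sign (k - p)) * NonRes.f (k - p)
        = (-j₁) * omega k - omega p + j₂ * omega (k - p) := by
      simp only [omega, NonRes.f]
      ring
    rwa [heq] at hkey
end

section
/- For every k₁ > 0 there exist constants C > 0 and K > 2k₁ such that for every j ∈ {−1, 1}, every k ∈ ℝ with |k| ≥ K, and every p ∈ ℝ with 0 < |p| ≤ k₁, setting m = k − p, the quantity ω(p) + j(ω(k) − ω(m)) is nonzero, the quantity ω(p) + j·p is nonzero, and | j·ρ(k)/(ω(p) + j(ω(k) − ω(m))) − j·k/(ω(p) + j·p) | ≤ C/|k|. -/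
noncomputable def rho (k : ℝ) : ℝ := Real.sign k * (k ^ 2 / Real.sqrt (1 + k ^ 2))

lemma omega_neg (x : ℝ) : omega (-x) = -omega x := by
  simp only [omega, Real.sign_neg, neg_sq, neg_mul]

lemma rho_neg (x : ℝ) : rho (-x) = -rho x := by
  simp only [rho, Real.sign_neg, neg_sq, neg_mul]

lemma omega_of_pos {x : ℝ} (hx : 0 < x) : omega x = √(1 + x ^ 2) := by
  rw [omega, Real.sign_of_pos hx, one_mul]

lemma rho_of_pos {x : ℝ} (hx : 0 < x) : rho x = x ^ 2 / √(1 + x ^ 2) := by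
  rw [rho, Real.sign_of_pos hx, one_mul]

lemma abs_omega {x : ℝ} (hx : x ≠ 0) : |omega x| = √(1 + x ^ 2) := by
  rcases hx.lt_or_gt with hx | hx
  · rw [omega, Real.sign_of_neg hx, abs_mul, abs_neg, abs_one, one_mul,
      abs_of_nonneg (by positivity)]
  · rw [omega_of_pos hx, abs_of_nonneg (by positivity)]

lemma abs_le_sqrt_one_add_sq (x : ℝ) : |x| ≤ √(1 + x ^ 2) :=
  Real.abs_le_sqrt (by linarith)

lemma sqrt_one_add_sq_le_one_add_abs (x : ℝ) : √(1 + x ^ 2) ≤ 1 + |x| := by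
  simpa only [Real.norm_eq_abs, sq_abs] using sqrt_one_add_norm_sq_le x

lemma abs_le_abs_of_mul_eq_mul {a b c d : ℝ} (h : a * b = c * d) (hb : 0 < b) (hcb : |c| ≤ b) :
    |a| ≤ |d| := by
  refine le_of_mul_le_mul_right ?_ hb
  calc |a| * b = |c| * |d| := by rw [← abs_of_pos hb, ← abs_mul, h, abs_mul]
    _ ≤ |d| * b := by rw [mul_comm]; exact mul_le_mul_of_nonneg_left hcb (abs_nonneg d)

lemma abs_sqrt_one_add_sq_sub_le (x y : ℝ) : |√(1 + x ^ 2) - √(1 + y ^ 2)| ≤ |x - y| := by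
  have hx := abs_le_sqrt_one_add_sq x
  have hy := abs_le_sqrt_one_add_sq y
  refine abs_le_abs_of_mul_eq_mul (b := √(1 + x ^ 2) + √(1 + y ^ 2)) (c := x + y) ?_
    (by positivity) ((abs_add_le x y).trans (add_le_add hx hy))
  linear_combination Real.sq_sqrt (by positivity : (0 : ℝ) ≤ 1 + x ^ 2)
    - Real.sq_sqrt (by positivity : (0 : ℝ) ≤ 1 + y ^ 2)

lemma one_div_le_sqrt_one_add_sq_sub_abs {x c : ℝ} (hxc : |x| ≤ c) :
    1 / (1 + 2 * c) ≤ √(1 + x ^ 2) - |x| := by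
  have hS := sqrt_one_add_sq_le_one_add_abs x
  have hprod : (√(1 + x ^ 2) - |x|) * (√(1 + x ^ 2) + |x|) = 1 := by
    linear_combination Real.sq_sqrt (by positivity : (0 : ℝ) ≤ 1 + x ^ 2) - sq_abs x
  rw [div_le_iff₀ (by linarith [abs_nonneg x])]
  calc 1 = (√(1 + x ^ 2) - |x|) * (√(1 + x ^ 2) + |x|) := hprod.symm
    _ ≤ (√(1 + x ^ 2) - |x|) * (1 + 2 * c) :=
      mul_le_mul_of_nonneg_left (by linarith) (by linarith [abs_le_sqrt_one_add_sq x])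

lemma sub_abs_le_abs_add_mul {w j s p : ℝ} (hj : |j| = 1) (hs : |s| ≤ |p|) :
    |w| - |p| ≤ |w + j * s| :=
  calc |w| - |p| ≤ |w| - |j * s| := by rw [abs_mul, hj, one_mul]; linarith
    _ ≤ |w + j * s| := abs_sub_abs_le_abs_add w (j * s)

lemma abs_div_sub_div_le {a b D₁ D₂ δ M : ℝ} (hδ : 0 < δ) (h₁ : δ ≤ |D₁|) (h₂ : δ ≤ |D₂|)
    (hM : |a * D₂ - b * D₁| ≤ M) : |a / D₁ - b / D₂| ≤ M / δ ^ 2 := by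
  have hD₁ : D₁ ≠ 0 := abs_pos.mp (hδ.trans_le h₁)
  have hD₂ : D₂ ≠ 0 := abs_pos.mp (hδ.trans_le h₂)
  rw [div_sub_div _ _ hD₁ hD₂, abs_div, abs_mul, mul_comm D₁]
  exact div_le_div₀ ((abs_nonneg _).trans hM) hM (by positivity) (by nlinarith)

lemma abs_sq_div_sqrt_one_add_sq_sub_le {x : ℝ} (hx : 0 < x) :
    |x ^ 2 / √(1 + x ^ 2) - x| ≤ 1 / x := by
  have hS := Real.sq_sqrt (by positivity : (0 : ℝ) ≤ 1 + x ^ 2)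
  have hxS : x ≤ √(1 + x ^ 2) := (le_abs_self x).trans (abs_le_sqrt_one_add_sq x)
  have hS0 : 0 < √(1 + x ^ 2) := hx.trans_le hxS
  rw [abs_sub_comm, abs_of_nonneg (sub_nonneg.mpr ((div_le_iff₀ hS0).mpr (by nlinarith))),
    sub_le_iff_le_add, div_add_div _ _ hx.ne' hS0.ne', le_div_iff₀ (by positivity)]
  nlinarith

lemma abs_mul_sqrt_one_add_sq_sub_le {x y : ℝ} (hx : 0 < x) (hy : 0 ≤ y) :
    |x * √(1 + y ^ 2) - y * √(1 + x ^ 2)| ≤ |x - y| := by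
  have hx1 : 1 ≤ √(1 + x ^ 2) := Real.one_le_sqrt.mpr (by nlinarith)
  have hy1 : 1 ≤ √(1 + y ^ 2) := Real.one_le_sqrt.mpr (by nlinarith)
  refine abs_le_abs_of_mul_eq_mul (b := x * √(1 + y ^ 2) + y * √(1 + x ^ 2)) (c := x + y) ?_
    (by positivity) ?_
  · linear_combination x ^ 2 * Real.sq_sqrt (by positivity : (0 : ℝ) ≤ 1 + y ^ 2)
      - y ^ 2 * Real.sq_sqrt (by positivity : (0 : ℝ) ≤ 1 + x ^ 2)
  · rw [abs_of_nonneg (by positivity)]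
    nlinarith

lemma abs_sq_div_sqrt_one_add_sq_mul_sub_le {k p : ℝ} (hk : 0 < k) (hm : 0 ≤ k - p) :
    |k ^ 2 / √(1 + k ^ 2) * p - k * (√(1 + k ^ 2) - √(1 + (k - p) ^ 2))| ≤ p ^ 2 / k := by
  set Sk := √(1 + k ^ 2)
  set Sm := √(1 + (k - p) ^ 2)
  have hSk : k ≤ Sk := (le_abs_self k).trans (abs_le_sqrt_one_add_sq k)
  have hSm : 0 ≤ Sm := Real.sqrt_nonneg _
  have hSk0 : 0 < Sk := hk.trans_le hSk
  have hkm : |k * Sm - (k - p) * Sk| ≤ |p| := by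
    simpa using abs_mul_sqrt_one_add_sq_sub_le hk hm
  have hid : k ^ 2 / Sk * p - k * (Sk - Sm)
      = k * p * (k * Sm - (k - p) * Sk) / (Sk * (Sk + Sm)) := by
    field_simp
    linear_combination Sk * Real.sq_sqrt (by positivity : (0 : ℝ) ≤ 1 + (k - p) ^ 2)
      - Sk * Real.sq_sqrt (by positivity : (0 : ℝ) ≤ 1 + k ^ 2)
  rw [hid, abs_div, abs_mul, abs_mul, abs_of_pos hk,
    abs_of_pos (by positivity : 0 < Sk * (Sk + Sm)), div_le_div_iff₀ (by positivity) hk, ← sq_abs p]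
  calc k * |p| * |k * Sm - (k - p) * Sk| * k ≤ k * |p| * |p| * k := by gcongr
    _ = |p| ^ 2 * (k * k) := by ring
    _ ≤ |p| ^ 2 * (Sk * (Sk + Sm)) := by gcongr; linarith

lemma kernel_jj_bound_of_pos {k₁ j k p : ℝ} (hj : |j| = 1) (hk : k₁ < k) (hp0 : 0 < |p|)
    (hpk : |p| ≤ k₁) :
    omega p + j * (omega k - omega (k - p)) ≠ 0 ∧
    omega p + j * p ≠ 0 ∧
    |j * rho k / (omega p + j * (omega k - omega (k - p))) - j * k / (omega p + j * p)|
      ≤ (1 + k₁ + k₁ ^ 2) * (1 + 2 * k₁) ^ 2 / |k| := by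
  have hk₁ : 0 < k₁ := hp0.trans_le hpk
  have hk0 : 0 < k := hk₁.trans hk
  have hm : 0 < k - p := by linarith [le_abs_self p]
  rw [omega_of_pos hk0, omega_of_pos hm, rho_of_pos hk0, abs_of_pos hk0]
  set Sk := √(1 + k ^ 2)
  set Sm := √(1 + (k - p) ^ 2)
  have hδ : 1 / (1 + 2 * k₁) ≤ |omega p| - |p| := by
    rw [abs_omega (abs_pos.mp hp0)]
    exact one_div_le_sqrt_one_add_sq_sub_abs hpk
  have hD₁ : 1 / (1 + 2 * k₁) ≤ |omega p + j * (Sk - Sm)| :=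
    hδ.trans (sub_abs_le_abs_add_mul hj (by simpa using abs_sqrt_one_add_sq_sub_le k (k - p)))
  have hD₂ : 1 / (1 + 2 * k₁) ≤ |omega p + j * p| := hδ.trans (sub_abs_le_abs_add_mul hj le_rfl)
  have hN : |j * (k ^ 2 / Sk) * (omega p + j * p) - j * k * (omega p + j * (Sk - Sm))|
      ≤ (1 + k₁ + k₁ ^ 2) / k := by
    have hsplit : j * (k ^ 2 / Sk) * (omega p + j * p) - j * k * (omega p + j * (Sk - Sm))
        = j * (omega p * (k ^ 2 / Sk - k) + j * (k ^ 2 / Sk * p - k * (Sk - Sm))) := by ring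
    have hω : |omega p| ≤ 1 + k₁ := by
      rw [abs_omega (abs_pos.mp hp0)]
      linarith [sqrt_one_add_sq_le_one_add_abs p]
    have hp2 : p ^ 2 ≤ k₁ ^ 2 := by
      rw [← sq_abs p]
      exact pow_le_pow_left₀ (abs_nonneg p) hpk 2
    rw [hsplit, abs_mul, hj, one_mul]
    calc _ ≤ |omega p * (k ^ 2 / Sk - k)| + |j * (k ^ 2 / Sk * p - k * (Sk - Sm))| :=
          abs_add_le _ _
      _ = |omega p| * |k ^ 2 / Sk - k| + |k ^ 2 / Sk * p - k * (Sk - Sm)| := by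
          rw [abs_mul, abs_mul, hj, one_mul]
      _ ≤ (1 + k₁) * (1 / k) + k₁ ^ 2 / k :=
          add_le_add (mul_le_mul hω (abs_sq_div_sqrt_one_add_sq_sub_le hk0) (abs_nonneg _)
            (by positivity)) ((abs_sq_div_sqrt_one_add_sq_mul_sub_le hk0 hm.le).trans (by gcongr))
      _ = (1 + k₁ + k₁ ^ 2) / k := by field_simp
  refine ⟨abs_pos.mp (lt_of_lt_of_le (by positivity) hD₁),
    abs_pos.mp (lt_of_lt_of_le (by positivity) hD₂), ?_⟩
  calc _ ≤ (1 + k₁ + k₁ ^ 2) / k / (1 / (1 + 2 * k₁)) ^ 2 :=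
        abs_div_sub_div_le (by positivity) hD₁ hD₂ hN
    _ = (1 + k₁ + k₁ ^ 2) * (1 + 2 * k₁) ^ 2 / k := by field_simp

/-- Asymptotics of the normal-form kernel `n̂_{jj}` (without the cut-off): for every
`k₁ > 0` there are `C > 0` and `K > 2k₁` such that for `j ∈ {−1,1}`, `|k| ≥ K` and
`0 < |p| ≤ k₁`, with `m = k − p`, the denominators `ω(p) + j(ω(k) − ω(m))` and
`ω(p) + j·p` are nonzero and
`|j·ρ(k)/(ω(p) + j(ω(k) − ω(m))) − j·k/(ω(p) + j·p)| ≤ C/|k|`. -/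
theorem kernel_jj_asymptotics (k₁ : ℝ) (hk₁ : 0 < k₁) :
    ∃ C > (0 : ℝ), ∃ K : ℝ, 2 * k₁ < K ∧
      ∀ j : ℝ, (j = 1 ∨ j = -1) → ∀ k p : ℝ, K ≤ |k| → 0 < |p| → |p| ≤ k₁ →
        omega p + j * (omega k - omega (k - p)) ≠ 0 ∧
        omega p + j * p ≠ 0 ∧
        |j * rho k / (omega p + j * (omega k - omega (k - p))) -
            j * k / (omega p + j * p)| ≤ C / |k| := by
  refine ⟨(1 + k₁ + k₁ ^ 2) * (1 + 2 * k₁) ^ 2, by positivity, 2 * k₁ + 1, by linarith,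
    fun j hj k p hK hp0 hpk => ?_⟩
  have hj : |j| = 1 := by rcases hj with rfl | rfl <;> norm_num
  wlog hk : 0 < k generalizing k p
  · have hk' : 0 < -k := by
      rw [abs_of_nonpos (not_lt.mp hk)] at hK
      linarith
    have := this (-k) (-p) (by rwa [abs_neg]) (by rwa [abs_neg]) (by rwa [abs_neg]) hk'
    have hD₁ : omega (-p) + j * (omega (-k) - omega (-k - -p))
        = -(omega p + j * (omega k - omega (k - p))) := by
      rw [show -k - -p = -(k - p) by ring, omega_neg, omega_neg, omega_neg]; ring
    have hD₂ : omega (-p) + j * -p = -(omega p + j * p) := by rw [omega_neg]; ring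
    rwa [hD₁, hD₂, rho_neg, mul_neg, mul_neg, neg_div_neg_eq, neg_div_neg_eq, abs_neg,
      neg_ne_zero, neg_ne_zero] at this
  exact kernel_jj_bound_of_pos hj (by rw [abs_of_pos hk] at hK; linarith) hp0 hpk
end

section
/- For every k₁ > 0 there exist constants C > 0 and K > 2k₁ such that for every j ∈ {−1, 1}, every k ∈ ℝ with |k| ≥ K, and every p ∈ ℝ with 0 < |p| ≤ k₁, setting m = k − p, the quantity −j·ω(k) − ω(p) − j·ω(m) is nonzero and | −j·ρ(k)/(−j·ω(k) − ω(p) − j·ω(m)) − 1/2 | ≤ C/|k|. -/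
lemma le_sqrt_one_add_sq (x : ℝ) : |x| ≤ Real.sqrt (1 + x ^ 2) := by
  calc |x| = Real.sqrt (x ^ 2) := (Real.sqrt_sq_eq_abs x).symm
  _ ≤ _ := Real.sqrt_le_sqrt (by linarith)

lemma sqrt_one_add_sq_le (x : ℝ) : Real.sqrt (1 + x ^ 2) ≤ |x| + 1 := by
  have h : (1 : ℝ) + x ^ 2 ≤ (|x| + 1) ^ 2 := by nlinarith [abs_nonneg x, sq_abs x]
  calc Real.sqrt (1 + x ^ 2) ≤ Real.sqrt ((|x| + 1) ^ 2) := Real.sqrt_le_sqrt h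
  _ = |x| + 1 := Real.sqrt_sq (by positivity)

lemma abs_sign_le_one (x : ℝ) : |Real.sign x| ≤ 1 := by
  rcases lt_trichotomy x 0 with h | h | h
  · rw [Real.sign_of_neg h]; norm_num
  · rw [h, Real.sign_zero]; norm_num
  · rw [Real.sign_of_pos h]; norm_num

lemma aux (k₁ a b c kk : ℝ) (hk₁ : 0 < k₁)
    (hkk : k₁ + Real.sqrt (1 + k₁ ^ 2) + 2 ≤ kk)
    (ha1 : kk ≤ a) (ha2 : a ≤ kk + 1)
    (hb1 : kk - k₁ ≤ b) (hb2 : b ≤ kk + k₁ + 1)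
    (hc : |c| ≤ Real.sqrt (1 + k₁ ^ 2))
    (hasq : a ^ 2 = 1 + kk ^ 2) :
    a + b + c ≠ 0 ∧
    |kk ^ 2 / a / (a + b + c) - 1 / 2| ≤ (k₁ + 2 + Real.sqrt (1 + k₁ ^ 2)) / kk := by
  set S := Real.sqrt (1 + k₁ ^ 2) with hS
  have hS0 : 0 ≤ S := Real.sqrt_nonneg _
  have hkk2 : 2 ≤ kk := by linarith
  have hc' := abs_le.mp hc
  have hE : kk + 2 ≤ a + b + c := by linarith
  have hEpos : 0 < a + b + c := by linarith
  have ha0 : 0 < a := by linarith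
  refine ⟨ne_of_gt hEpos, ?_⟩
  have heq : kk ^ 2 / a / (a + b + c) - 1 / 2
      = (kk ^ 2 - 1 - a * b - a * c) / (2 * (a * (a + b + c))) := by
    rw [div_div, div_sub_div _ _ (by positivity) two_ne_zero,
      show kk ^ 2 * 2 - a * (a + b + c) * 1 = kk ^ 2 - 1 - a * b - a * c by
        linear_combination -hasq,
      show a * (a + b + c) * 2 = 2 * (a * (a + b + c)) by ring]
  have hab1 : kk * (kk - k₁) ≤ a * b :=
    mul_le_mul ha1 hb1 (by linarith) (by linarith)
  have hab2 : a * b ≤ (kk + 1) * (kk + k₁ + 1) :=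
    mul_le_mul ha2 hb2 (by linarith) (by linarith)
  have hac : |a * c| ≤ (kk + 1) * S := by
    rw [abs_mul, abs_of_pos ha0]
    exact mul_le_mul ha2 hc (abs_nonneg _) (by linarith)
  have hac' := abs_le.mp hac
  have hnum : |kk ^ 2 - 1 - a * b - a * c| ≤ (k₁ + 2 + S) * (kk + 1) := by
    rw [abs_le]
    constructor <;> nlinarith
  have hden : 0 < 2 * (a * (a + b + c)) := by positivity
  rw [heq, abs_div, abs_of_pos hden, div_le_div_iff₀ hden (by linarith : (0:ℝ) < kk)]
  nlinarith [mul_le_mul_of_nonneg_right hnum (by linarith : (0:ℝ) ≤ kk),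
    mul_le_mul ha1 hE (by linarith) (by linarith)]

/-- Asymptotics of the normal-form kernel `n̂_{j,−j}` (without the cut-off): for every
`k₁ > 0` there are `C > 0` and `K > 2k₁` such that for `j ∈ {−1,1}`, `|k| ≥ K` and
`0 < |p| ≤ k₁`, with `m = k − p`, the denominator `−j·ω(k) − ω(p) − j·ω(m)` is
nonzero and `|−j·ρ(k)/(−j·ω(k) − ω(p) − j·ω(m)) − 1/2| ≤ C/|k|`. -/
theorem kernel_jmj_asymptotics (k₁ : ℝ) (hk₁ : 0 < k₁) :
    ∃ C > (0 : ℝ), ∃ K : ℝ, 2 * k₁ < K ∧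
      ∀ j : ℝ, (j = 1 ∨ j = -1) → ∀ k p : ℝ, K ≤ |k| → 0 < |p| → |p| ≤ k₁ →
        -j * omega k - omega p - j * omega (k - p) ≠ 0 ∧
        |(-j) * rho k / (-j * omega k - omega p - j * omega (k - p)) - 1 / 2|
          ≤ C / |k| := by
  set S := Real.sqrt (1 + k₁ ^ 2) with hS
  have hS0 : 0 ≤ S := Real.sqrt_nonneg _
  have hSk : k₁ ≤ S := by
    calc k₁ = |k₁| := (abs_of_pos hk₁).symm
    _ ≤ S := le_sqrt_one_add_sq k₁
  refine ⟨k₁ + 2 + S, by linarith, k₁ + S + 2, by linarith, ?_⟩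
  intro j hj k p hk hp hpk
  have hj2 : j * j = 1 := by rcases hj with h | h <;> rw [h] <;> norm_num
  have hj0 : j ≠ 0 := by rcases hj with h | h <;> rw [h] <;> norm_num
  have hk0 : k ≠ 0 := by
    intro h; rw [h, abs_zero] at hk; linarith
  have hpa := abs_le.mp hpk
  -- bounds
  have ha1 : |k| ≤ Real.sqrt (1 + k ^ 2) := le_sqrt_one_add_sq k
  have ha2 : Real.sqrt (1 + k ^ 2) ≤ |k| + 1 := sqrt_one_add_sq_le k
  have hb1' : |k| - k₁ ≤ |k - p| := by
    have := abs_sub_abs_le_abs_sub k p; linarith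
  have hb2' : |k - p| ≤ |k| + k₁ := by
    have := abs_sub k p; linarith
  have hb1 : |k| - k₁ ≤ Real.sqrt (1 + (k - p) ^ 2) :=
    le_trans hb1' (le_sqrt_one_add_sq _)
  have hb2 : Real.sqrt (1 + (k - p) ^ 2) ≤ |k| + k₁ + 1 := by
    have := sqrt_one_add_sq_le (k - p); linarith
  have hasq : Real.sqrt (1 + k ^ 2) ^ 2 = 1 + |k| ^ 2 := by
    rw [Real.sq_sqrt (by positivity), sq_abs]
  have hw : |omega p| ≤ S := by
    rw [omega, abs_mul]
    have h1 : Real.sqrt (1 + p ^ 2) ≤ S := by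
      apply Real.sqrt_le_sqrt
      nlinarith [sq_abs p, abs_nonneg p]
    have h2 := abs_sign_le_one p
    calc |Real.sign p| * |Real.sqrt (1 + p ^ 2)| ≤ 1 * S := by
          apply mul_le_mul h2 _ (abs_nonneg _) zero_le_one
          rw [abs_of_nonneg (Real.sqrt_nonneg _)]; exact h1
    _ = S := one_mul S
  set a := Real.sqrt (1 + k ^ 2)
  set b := Real.sqrt (1 + (k - p) ^ 2)
  set w := omega p with hwdef
  have hk2 : k ^ 2 = |k| ^ 2 := (sq_abs k).symm
  rcases hk0.lt_or_gt with hkneg | hkpos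
  · -- k < 0
    have hkabs : |k| = -k := abs_of_neg hkneg
    have hmneg : k - p < 0 := by
      have : p ≥ -k₁ := hpa.1
      nlinarith [hk]
    have hok : omega k = -a := by
      rw [omega, Real.sign_of_neg hkneg]; ring
    have hom : omega (k - p) = -b := by
      rw [omega, Real.sign_of_neg hmneg]; ring
    have hrk : rho k = -(k ^ 2 / a) := by
      rw [rho, Real.sign_of_neg hkneg]; ring
    have hcbd : |(-j) * w| ≤ S := by
      rw [abs_mul, abs_neg]
      rcases hj with h | h <;> rw [h] <;> simpa using hw
    obtain ⟨hne, hbd⟩ := aux k₁ a b ((-j) * w) |k| hk₁ hk ha1 ha2 hb1 hb2 hcbd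
      (by rw [hasq])
    have hD : -j * omega k - omega p - j * omega (k - p) = j * (a + b + (-j) * w) := by
      rw [hok, hom]
      linear_combination w * hj2
    constructor
    · rw [hD]; exact mul_ne_zero hj0 hne
    · rw [hD, hrk]
      have : (-j) * -(k ^ 2 / a) = j * (k ^ 2 / a) := by ring
      rw [this, mul_div_mul_left _ _ hj0, hk2]
      exact hbd
  · -- k > 0
    have hkabs : |k| = k := abs_of_pos hkpos
    have hmpos : 0 < k - p := by
      have : p ≤ k₁ := hpa.2
      nlinarith [hk]
    have hok : omega k = a := by
      rw [omega, Real.sign_of_pos hkpos, one_mul]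
    have hom : omega (k - p) = b := by
      rw [omega, Real.sign_of_pos hmpos, one_mul]
    have hrk : rho k = k ^ 2 / a := by
      rw [rho, Real.sign_of_pos hkpos, one_mul]
    have hcbd : |j * w| ≤ S := by
      rw [abs_mul]
      rcases hj with h | h <;> rw [h] <;> simpa using hw
    obtain ⟨hne, hbd⟩ := aux k₁ a b (j * w) |k| hk₁ hk ha1 ha2 hb1 hb2 hcbd
      (by rw [hasq])
    have hD : -j * omega k - omega p - j * omega (k - p) = (-j) * (a + b + j * w) := by
      rw [hok, hom]
      linear_combination w * hj2
    constructor
    · rw [hD]; exact mul_ne_zero (neg_ne_zero.mpr hj0) hne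
    · rw [hD, hrk, mul_div_mul_left _ _ (neg_ne_zero.mpr hj0), hk2]
      exact hbd
end

section
/- Let a : ℝ → ℝ be continuously differentiable with a and its derivative ∂_x a bounded, and let f : ℝ → ℝ be continuously differentiable with f and ∂_x f square-integrable. Then ∫_ℝ a·f·∂_x f dx = −(1/2)·∫_ℝ (∂_x a)·f² dx (both integrals being absolutely convergent). -/
open MeasureTheory

theorem integrable_mul_of_integrable_sq {α : Type*} [MeasurableSpace α] {μ : Measure α}
    {f g : α → ℝ} (hf : AEStronglyMeasurable f μ) (hg : AEStronglyMeasurable g μ)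
    (hf2 : Integrable (fun x => f x ^ 2) μ) (hg2 : Integrable (fun x => g x ^ 2) μ) :
    Integrable (fun x => f x * g x) μ :=
  ((memLp_two_iff_integrable_sq hf).2 hf2).integrable_mul ((memLp_two_iff_integrable_sq hg).2 hg2)

/-- Integration by parts against `(f²)' = 2 f f'`; the boundary terms vanish because
`a f²` and its derivative are integrable. -/
theorem integral_mul_mul_deriv_eq_neg_half {a f : ℝ → ℝ}
    (ha : Differentiable ℝ a) (hf : Differentiable ℝ f)
    (h_aff' : Integrable fun x => a x * f x * deriv f x)
    (h_a'f2 : Integrable fun x => deriv a x * f x ^ 2)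
    (h_af2 : Integrable fun x => a x * f x ^ 2) :
    ∫ x, a x * f x * deriv f x = -(1 / 2) * ∫ x, deriv a x * f x ^ 2 := by
  have h_sq : ∀ x, HasDerivAt (fun x => f x ^ 2) (2 * (f x * deriv f x)) x := fun x =>
    ((hf x).hasDerivAt.fun_pow 2).congr_deriv (by norm_num [mul_assoc])
  have h_int : Integrable fun x => a x * (2 * (f x * deriv f x)) :=
    (h_aff'.const_mul 2).congr (ae_of_all _ fun x => by ring)
  have h_parts : ∫ x, a x * (2 * (f x * deriv f x)) = -∫ x, deriv a x * f x ^ 2 :=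
    integral_mul_deriv_eq_deriv_mul_of_integrable (fun x _ => (ha x).hasDerivAt)
      (fun x _ => h_sq x) h_int h_a'f2 h_af2
  have h_lhs : ∫ x, a x * (2 * (f x * deriv f x)) = 2 * ∫ x, a x * f x * deriv f x := by
    rw [← integral_const_mul]
    exact integral_congr_ae (ae_of_all _ fun x => by ring)
  linarith

/-- Integration by parts for the quadratic highest-order term: if `a` is C¹ with `a`
and `∂ₓa` bounded, and `f` is C¹ with `f` and `∂ₓf` square-integrable, then
∫ a·f·∂ₓf dx = −(1/2)·∫ (∂ₓa)·f² dx, both integrals being absolutely convergent. -/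
theorem int_by_parts_quadratic (a f : ℝ → ℝ)
    (ha : ContDiff ℝ 1 a) (haB : ∃ M, ∀ x, |a x| ≤ M) (haB' : ∃ M, ∀ x, |deriv a x| ≤ M)
    (hf : ContDiff ℝ 1 f)
    (hf2 : Integrable (fun x => (f x) ^ 2))
    (hf2' : Integrable (fun x => (deriv f x) ^ 2)) :
    Integrable (fun x => a x * f x * deriv f x) ∧
    Integrable (fun x => deriv a x * (f x) ^ 2) ∧
    ∫ x : ℝ, a x * f x * deriv f x = -(1 / 2) * ∫ x : ℝ, deriv a x * (f x) ^ 2 := by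
  obtain ⟨M, hM⟩ := haB
  obtain ⟨M', hM'⟩ := haB'
  have h_ff' := integrable_mul_of_integrable_sq hf.continuous.aestronglyMeasurable
    (hf.continuous_deriv le_rfl).aestronglyMeasurable hf2 hf2'
  have h_aff' : Integrable fun x => a x * f x * deriv f x := by
    simpa only [mul_assoc] using
      h_ff'.bdd_mul ha.continuous.aestronglyMeasurable (ae_of_all _ hM)
  have h_a'f2 := hf2.bdd_mul (ha.continuous_deriv le_rfl).aestronglyMeasurable (ae_of_all _ hM')
  have h_af2 := hf2.bdd_mul ha.continuous.aestronglyMeasurable (ae_of_all _ hM)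
  exact ⟨h_aff', h_a'f2, integral_mul_mul_deriv_eq_neg_half (ha.differentiable one_ne_zero)
    (hf.differentiable one_ne_zero) h_aff' h_a'f2 h_af2⟩
end

section
/- Let a₁, a₋₁ : ℝ → ℝ be continuously differentiable with a_j and ∂_x a_j bounded, and let f₁, f₋₁ : ℝ → ℝ be continuously differentiable with f_j and ∂_x f_j square-integrable (j ∈ {−1,1}). Then | Σ_{j∈{±1}} ∫_ℝ a_j·f_j·∂_x f_{−j} dx − (1/2)·∫_ℝ (a_{−1} − a₁)·(f₁ + f_{−1})·∂_x(f₁ − f_{−1}) dx | ≤ ( ‖∂_x a₁‖_{L^∞} + ‖∂_x a_{−1}‖_{L^∞} )·( ‖f₁‖²_{L²} + ‖f₋₁‖²_{L²} ). -/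
/-!
Put `q(s, t) = s t / 2 + (s² - t²) / 4`. Pointwise, the integrand on the left is
`a₁ · (q(f₁, f₋₁))' + a₋₁ · (q(f₋₁, f₁))'`, so integrating by parts moves every derivative of
`f₁, f₋₁` onto the coefficients and leaves `-∫ (a₁' q(f₁, f₋₁) + a₋₁' q(f₋₁, f₁))`, which is
controlled by `|q(s, t)| ≤ s² + t²`.
-/

open MeasureTheory
open scoped ENNReal

noncomputable def mixedQuadratic (s t : ℝ) : ℝ := s * t / 2 + (s ^ 2 - t ^ 2) / 4

lemma abs_mixedQuadratic_le (s t : ℝ) : |mixedQuadratic s t| ≤ s ^ 2 + t ^ 2 := by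
  rw [mixedQuadratic, abs_le]
  constructor <;> nlinarith [sq_nonneg (s + t), sq_nonneg (s - t)]

lemma hasDerivAt_mixedQuadratic {f g : ℝ → ℝ} {f' g' x : ℝ} (hf : HasDerivAt f f' x)
    (hg : HasDerivAt g g' x) :
    HasDerivAt (fun y => mixedQuadratic (f y) (g y))
      ((f x + g x) * f' / 2 + (f x - g x) * g' / 2) x := by
  refine (((hf.fun_mul hg).div_const 2).add
    (((hf.fun_pow 2).sub (hg.fun_pow 2)).div_const 4)).congr_deriv ?_
  push_cast
  ring

section MeasureSpace

variable {α : Type*} [MeasurableSpace α] {μ : Measure α}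

lemma integrable_mixedQuadratic {f g : α → ℝ} (hf : MemLp f 2 μ) (hg : MemLp g 2 μ) :
    Integrable (fun x => mixedQuadratic (f x) (g x)) μ :=
  ((hf.integrable_mul hg).div_const 2).add ((hf.integrable_sq.sub hg.integrable_sq).div_const 4)

lemma integrable_mixedQuadratic_deriv {f g f' g' : α → ℝ} (hf : MemLp f 2 μ) (hg : MemLp g 2 μ)
    (hf' : MemLp f' 2 μ) (hg' : MemLp g' 2 μ) :
    Integrable (fun x => (f x + g x) * f' x / 2 + (f x - g x) * g' x / 2) μ :=
  (((hf.add hg).integrable_mul hf').div_const 2).add (((hf.sub hg).integrable_mul hg').div_const 2)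

lemma memLp_top_of_abs_le {c : α → ℝ} (hc : AEStronglyMeasurable c μ)
    (hcB : ∃ M, ∀ x, |c x| ≤ M) : MemLp c ∞ μ :=
  let ⟨M, hM⟩ := hcB
  memLp_top_of_bound hc M (ae_of_all _ hM)

lemma integrable_mul_mul_of_memLp {c u v : α → ℝ} (hc : MemLp c ∞ μ) (hu : MemLp u 2 μ)
    (hv : MemLp v 2 μ) : Integrable (fun x => c x * u x * v x) μ := by
  simpa only [Pi.mul_def, mul_assoc] using (hu.integrable_mul hv).mul_of_top_right hc

lemma abs_integral_mul_le_iSup_mul_integral {c φ ψ : α → ℝ} (hcB : ∃ M, ∀ x, |c x| ≤ M)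
    (hφψ : ∀ x, |φ x| ≤ ψ x) (hψ : Integrable ψ μ) :
    |∫ x, c x * φ x ∂μ| ≤ (⨆ x, |c x|) * ∫ x, ψ x ∂μ := by
  obtain ⟨M, hM⟩ := hcB
  have hc_le : ∀ x, |c x| ≤ ⨆ x, |c x| :=
    le_ciSup ⟨M, by rintro _ ⟨y, rfl⟩; exact hM y⟩
  rw [← Real.norm_eq_abs, ← integral_const_mul]
  refine norm_integral_le_of_norm_le (hψ.const_mul (⨆ x, |c x|)) (ae_of_all _ fun x => ?_)
  rw [Real.norm_eq_abs, abs_mul]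
  exact mul_le_mul (hc_le x) (hφψ x) (abs_nonneg _) ((abs_nonneg _).trans (hc_le x))

end MeasureSpace

lemma integral_mul_deriv_eq_neg_integral_deriv_mul_of_memLp_top {c c' φ φ' : ℝ → ℝ}
    (hc : ∀ x, HasDerivAt c (c' x) x) (hφ : ∀ x, HasDerivAt φ (φ' x) x)
    (hc_top : MemLp c ∞) (hc'_top : MemLp c' ∞) (hφ_int : Integrable φ)
    (hφ'_int : Integrable φ') :
    ∫ x, c x * φ' x = -∫ x, c' x * φ x :=
  integral_mul_deriv_eq_deriv_mul_of_integrable (fun x _ => hc x) (fun x _ => hφ x)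
    (hφ'_int.mul_of_top_right hc_top) (hφ_int.mul_of_top_right hc'_top)
    (hφ_int.mul_of_top_right hc_top)

theorem integral_mixed_terms_eq {a b f g a' b' f' g' : ℝ → ℝ} (ha : ∀ x, HasDerivAt a (a' x) x)
    (hb : ∀ x, HasDerivAt b (b' x) x) (hf : ∀ x, HasDerivAt f (f' x) x)
    (hg : ∀ x, HasDerivAt g (g' x) x)
    (ha_top : MemLp a ∞) (ha'_top : MemLp a' ∞) (hb_top : MemLp b ∞) (hb'_top : MemLp b' ∞)
    (hf2 : MemLp f 2) (hg2 : MemLp g 2) (hf'2 : MemLp f' 2) (hg'2 : MemLp g' 2) :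
    ((∫ x, a x * f x * g' x) + ∫ x, b x * g x * f' x)
        - 1 / 2 * ∫ x, (b x - a x) * (f x + g x) * (f' x - g' x)
      = -((∫ x, a' x * mixedQuadratic (f x) (g x)) + ∫ x, b' x * mixedQuadratic (g x) (f x)) := by
  have hq₁ : ∀ x, HasDerivAt (fun y => mixedQuadratic (f y) (g y))
      ((f x + g x) * f' x / 2 + (f x - g x) * g' x / 2) x :=
    fun x => hasDerivAt_mixedQuadratic (hf x) (hg x)
  have hq₂ : ∀ x, HasDerivAt (fun y => mixedQuadratic (g y) (f y))
      ((g x + f x) * g' x / 2 + (g x - f x) * f' x / 2) x :=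
    fun x => hasDerivAt_mixedQuadratic (hg x) (hf x)
  have hq₁' := integrable_mixedQuadratic_deriv hf2 hg2 hf'2 hg'2
  have hq₂' := integrable_mixedQuadratic_deriv hg2 hf2 hg'2 hf'2
  have ibp₁ := integral_mul_deriv_eq_neg_integral_deriv_mul_of_memLp_top ha hq₁ ha_top ha'_top
    (integrable_mixedQuadratic hf2 hg2) hq₁'
  have ibp₂ := integral_mul_deriv_eq_neg_integral_deriv_mul_of_memLp_top hb hq₂ hb_top hb'_top
    (integrable_mixedQuadratic hg2 hf2) hq₂'
  have hA₁ := integrable_mul_mul_of_memLp ha_top hf2 hg'2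
  have hA₂ := integrable_mul_mul_of_memLp hb_top hg2 hf'2
  have hA₃ : Integrable fun x => (b x - a x) * (f x + g x) * (f' x - g' x) :=
    integrable_mul_mul_of_memLp (hb_top.sub ha_top) (hf2.add hg2) (hf'2.sub hg'2)
  rw [neg_add, ← ibp₁, ← ibp₂, ← integral_const_mul, ← integral_add hA₁ hA₂,
    ← integral_sub, ← integral_add]
  · congr 1
    ext x
    ring
  · exact hq₁'.mul_of_top_right ha_top
  · exact hq₂'.mul_of_top_right hb_top
  · exact hA₁.add hA₂
  · exact hA₃.const_mul _

/-- Rewriting the mixed highest-order terms: if `a₁, a₋₁` are C¹ with `a_j`, `∂ₓa_j`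
bounded and `f₁, f₋₁` are C¹ with `f_j`, `∂ₓf_j` square-integrable, then
| Σ_{j∈{±1}} ∫ a_j·f_j·∂ₓf_{−j} dx − (1/2)∫ (a₋₁ − a₁)(f₁ + f₋₁)·∂ₓ(f₁ − f₋₁) dx |
  ≤ (‖∂ₓa₁‖_{L^∞} + ‖∂ₓa₋₁‖_{L^∞})(‖f₁‖²_{L²} + ‖f₋₁‖²_{L²}). -/
theorem mixed_terms_rewrite (a1 am1 f1 fm1 : ℝ → ℝ)
    (ha1 : ContDiff ℝ 1 a1) (ham1 : ContDiff ℝ 1 am1)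
    (ha1B : ∃ M, ∀ x, |a1 x| ≤ M) (ha1B' : ∃ M, ∀ x, |deriv a1 x| ≤ M)
    (ham1B : ∃ M, ∀ x, |am1 x| ≤ M) (ham1B' : ∃ M, ∀ x, |deriv am1 x| ≤ M)
    (hf1 : ContDiff ℝ 1 f1) (hfm1 : ContDiff ℝ 1 fm1)
    (hf1sq : Integrable (fun x => (f1 x) ^ 2))
    (hf1sq' : Integrable (fun x => (deriv f1 x) ^ 2))
    (hfm1sq : Integrable (fun x => (fm1 x) ^ 2))
    (hfm1sq' : Integrable (fun x => (deriv fm1 x) ^ 2)) :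
    |((∫ x : ℝ, a1 x * f1 x * deriv fm1 x) + (∫ x : ℝ, am1 x * fm1 x * deriv f1 x))
        - (1 / 2) * ∫ x : ℝ, (am1 x - a1 x) * (f1 x + fm1 x) * (deriv f1 x - deriv fm1 x)|
      ≤ ((⨆ x : ℝ, |deriv a1 x|) + (⨆ x : ℝ, |deriv am1 x|)) *
          ((∫ x : ℝ, (f1 x) ^ 2) + (∫ x : ℝ, (fm1 x) ^ 2)) := by
  have hasDerivAt_deriv {u : ℝ → ℝ} (hu : ContDiff ℝ 1 u) (x : ℝ) : HasDerivAt u (deriv u x) x :=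
    (hu.differentiable one_ne_zero x).hasDerivAt
  have memLp_two {u : ℝ → ℝ} (hu : ContDiff ℝ 1 u) (hu2 : Integrable fun x => u x ^ 2) :
      MemLp u 2 := (memLp_two_iff_integrable_sq hu.continuous.aestronglyMeasurable).2 hu2
  have memLp_two_deriv {u : ℝ → ℝ} (hu2 : Integrable fun x => deriv u x ^ 2) :
      MemLp (deriv u) 2 :=
    (memLp_two_iff_integrable_sq (measurable_deriv u).aestronglyMeasurable).2 hu2
  rw [integral_mixed_terms_eq (hasDerivAt_deriv ha1) (hasDerivAt_deriv ham1)
    (hasDerivAt_deriv hf1) (hasDerivAt_deriv hfm1)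
    (memLp_top_of_abs_le ha1.continuous.aestronglyMeasurable ha1B)
    (memLp_top_of_abs_le (measurable_deriv a1).aestronglyMeasurable ha1B')
    (memLp_top_of_abs_le ham1.continuous.aestronglyMeasurable ham1B)
    (memLp_top_of_abs_le (measurable_deriv am1).aestronglyMeasurable ham1B')
    (memLp_two hf1 hf1sq) (memLp_two hfm1 hfm1sq) (memLp_two_deriv hf1sq')
    (memLp_two_deriv hfm1sq'), abs_neg]
  calc _ ≤ _ := abs_add_le _ _
    _ ≤ (⨆ x, |deriv a1 x|) * (∫ x, f1 x ^ 2 + fm1 x ^ 2)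
        + (⨆ x, |deriv am1 x|) * (∫ x, f1 x ^ 2 + fm1 x ^ 2) :=
      add_le_add
        (abs_integral_mul_le_iSup_mul_integral ha1B' (fun _ => abs_mixedQuadratic_le _ _)
          (hf1sq.add hfm1sq))
        (abs_integral_mul_le_iSup_mul_integral ham1B'
          (fun _ => (abs_mixedQuadratic_le _ _).trans_eq (add_comm _ _)) (hf1sq.add hfm1sq))
    _ = _ := by rw [integral_add hf1sq hfm1sq, add_mul]
end

section
/- Let δ > 0 and m, M ≥ 0 be real numbers. Then there exists a constant C > 0 such that for every ε ∈ (0,1] and every measurable function g : ℝ → ℂ with ∫_ℝ (1+k²)^{m+M}|g(k)|² dk < ∞, one has ∫_{|k| ≥ δ} (1+k²)^m · ε^{−2}·|g(k/ε)|² dk ≤ C²·ε^{2(m+M)−1}·∫_ℝ (1+k²)^{m+M}|g(k)|² dk. Equivalently, ‖(χ_{[−δ,δ]} − 1)·ε^{−1} g(ε^{−1}·)‖_{L²(m)} ≤ C·ε^{m+M−1/2}·‖(1+k²)^{(m+M)/2} g‖_{L²}. -/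
open MeasureTheory
open scoped ENNReal

/-! On `|k| ≥ δ` we have `1 + k² ≤ (1 + δ⁻²)(ε² + k²)` and the right-hand side is at least `1`,
so raising to the power `m` loses nothing when the exponent is enlarged to `m + M`. Since
`ε² + k² = ε²(1 + (k/ε)²)`, the substitution `k = εu` turns the weight into
`ε^{2(m+M)-1}(1 + u²)^{m+M}`, giving the estimate with `C² = (1 + δ⁻²)^{m+M}`. -/

lemma lintegral_comp_div {a : ℝ} (ha : a ≠ 0) (f : ℝ → ℝ≥0∞) :
    ∫⁻ x, f (x / a) = ENNReal.ofReal |a| * ∫⁻ y, f y := by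
  conv_lhs => rw [← Real.smul_map_volume_mul_left ha]
  rw [lintegral_smul_measure, (measurableEmbedding_mulLeft₀ ha).lintegral_map, smul_eq_mul]
  simp only [mul_div_cancel_left₀ _ ha]

lemma one_add_sq_rpow_le {δ : ℝ} (hδ : 0 < δ) {m M : ℝ} (hm : 0 ≤ m) (hM : 0 ≤ M) (ε : ℝ)
    {k : ℝ} (hk : δ ≤ |k|) :
    (1 + k ^ 2) ^ m ≤ ((1 + δ⁻¹ ^ 2) * (ε ^ 2 + k ^ 2)) ^ (m + M) := by
  have hδk : 1 ≤ δ⁻¹ ^ 2 * k ^ 2 := by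
    rw [← mul_pow, ← sq_abs (δ⁻¹ * k), abs_mul, abs_inv, abs_of_pos hδ]
    exact one_le_pow₀ (by rwa [le_inv_mul_iff₀ hδ, mul_one])
  have hX : 1 + k ^ 2 ≤ (1 + δ⁻¹ ^ 2) * (ε ^ 2 + k ^ 2) := by nlinarith [sq_nonneg ε, sq_nonneg δ⁻¹]
  calc (1 + k ^ 2) ^ m ≤ ((1 + δ⁻¹ ^ 2) * (ε ^ 2 + k ^ 2)) ^ m := by gcongr
    _ ≤ _ := Real.rpow_le_rpow_of_exponent_le (by nlinarith [sq_nonneg k]) (by linarith)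

lemma sq_rpow_mul_inv_sq {ε : ℝ} (hε : 0 < ε) (s : ℝ) :
    (ε ^ 2) ^ s * ε⁻¹ ^ 2 = ε ^ (2 * s - 1) * ε⁻¹ := by
  rw [← Real.rpow_natCast_mul hε.le, Real.rpow_sub hε, Real.rpow_one]
  field_simp
  norm_num [mul_comm]

lemma one_add_sq_rpow_mul_inv_sq_le {δ : ℝ} (hδ : 0 < δ) {m M : ℝ} (hm : 0 ≤ m) (hM : 0 ≤ M)
    {ε : ℝ} (hε : 0 < ε) {k : ℝ} (hk : δ ≤ |k|) :
    (1 + k ^ 2) ^ m * ε⁻¹ ^ 2 ≤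
      (1 + δ⁻¹ ^ 2) ^ (m + M) * ε ^ (2 * (m + M) - 1) * ε⁻¹ * (1 + (k / ε) ^ 2) ^ (m + M) := by
  have hscale : ε ^ 2 + k ^ 2 = ε ^ 2 * (1 + (k / ε) ^ 2) := by field_simp
  calc (1 + k ^ 2) ^ m * ε⁻¹ ^ 2 ≤ ((1 + δ⁻¹ ^ 2) * (ε ^ 2 + k ^ 2)) ^ (m + M) * ε⁻¹ ^ 2 := by
        gcongr; exact one_add_sq_rpow_le hδ hm hM ε hk
    _ = (1 + δ⁻¹ ^ 2) ^ (m + M) * ((ε ^ 2) ^ (m + M) * ε⁻¹ ^ 2) * (1 + (k / ε) ^ 2) ^ (m + M) := by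
        rw [hscale, Real.mul_rpow (by positivity) (by positivity),
          Real.mul_rpow (by positivity) (by positivity)]
        ring
    _ = _ := by rw [sq_rpow_mul_inv_sq hε]; ring

/-- Cut-off estimate for concentrated wave packets: for `δ > 0` and `m, M ≥ 0` there is
`C > 0` such that for all `ε ∈ (0,1]` and all measurable `g` with
∫ (1+k²)^{m+M}|g(k)|² dk < ∞ one has
∫_{|k| ≥ δ} (1+k²)^m ε⁻²|g(k/ε)|² dk ≤ C²·ε^{2(m+M)−1}·∫ (1+k²)^{m+M}|g(k)|² dk,
i.e. ‖(χ_{[−δ,δ]} − 1)·ε⁻¹g(ε⁻¹·)‖_{L²(m)} ≤ C·ε^{m+M−1/2}·‖(1+k²)^{(m+M)/2}g‖_{L²}. -/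
theorem cutoff_estimate (δ : ℝ) (hδ : 0 < δ) (m M : ℝ) (hm : 0 ≤ m) (hM : 0 ≤ M) :
    ∃ C > (0 : ℝ), ∀ ε : ℝ, 0 < ε → ε ≤ 1 → ∀ g : ℝ → ℂ, Measurable g →
      (∫⁻ k : ℝ, ENNReal.ofReal ((1 + k ^ 2) ^ (m + M) * ‖g k‖ ^ 2)) < ⊤ →
      (∫⁻ k in {k : ℝ | δ ≤ |k|},
          ENNReal.ofReal ((1 + k ^ 2) ^ m * ε⁻¹ ^ 2 * ‖g (k / ε)‖ ^ 2))
        ≤ ENNReal.ofReal (C ^ 2 * ε ^ (2 * (m + M) - 1)) *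
            ∫⁻ k : ℝ, ENNReal.ofReal ((1 + k ^ 2) ^ (m + M) * ‖g k‖ ^ 2) := by
  refine ⟨√((1 + δ⁻¹ ^ 2) ^ (m + M)), by positivity, fun ε hε _ g _ _ => ?_⟩
  rw [Real.sq_sqrt (by positivity)]
  set A := (1 + δ⁻¹ ^ 2) ^ (m + M) * ε ^ (2 * (m + M) - 1)
  set f : ℝ → ℝ≥0∞ := fun u => ENNReal.ofReal ((1 + u ^ 2) ^ (m + M) * ‖g u‖ ^ 2)
  have hS : MeasurableSet {k : ℝ | δ ≤ |k|} := measurableSet_le measurable_const measurable_abs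
  have hpointwise (k : ℝ) :
      {k : ℝ | δ ≤ |k|}.indicator
          (fun k => ENNReal.ofReal ((1 + k ^ 2) ^ m * ε⁻¹ ^ 2 * ‖g (k / ε)‖ ^ 2)) k ≤
        ENNReal.ofReal (A * ε⁻¹) * f (k / ε) := by
    by_cases hk : k ∈ {k : ℝ | δ ≤ |k|}
    · rw [Set.indicator_of_mem hk, ← ENNReal.ofReal_mul (by positivity)]
      gcongr ENNReal.ofReal ?_
      rw [← mul_assoc]
      exact mul_le_mul_of_nonneg_right (one_add_sq_rpow_mul_inv_sq_le hδ hm hM hε hk) (by positivity)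
    · simp only [Set.indicator_of_notMem hk, zero_le]
  calc _ ≤ ∫⁻ k, ENNReal.ofReal (A * ε⁻¹) * f (k / ε) := by
        rw [← lintegral_indicator hS]; exact lintegral_mono hpointwise
    _ = ENNReal.ofReal A * ∫⁻ u, f u := by
        rw [lintegral_const_mul' _ _ ENNReal.ofReal_ne_top, lintegral_comp_div hε.ne',
          abs_of_pos hε, ← mul_assoc, ← ENNReal.ofReal_mul (by positivity),
          inv_mul_cancel_right₀ hε.ne']
end

section
/- Let C > 0, T₀ > 0 and E₀ ≥ 0. Then there exist M > 0 and ε₀ ∈ (0,1] such that for every ε ∈ (0, ε₀) and every continuously differentiable function E : [0, T₀/ε²] → [0, ∞) satisfying E(0) ≤ E₀ and E′(t) ≤ C·ε²·( E(t) + ε^{1/2}·E(t)^{3/2} + 1 ) for all t ∈ [0, T₀/ε²], one has E(t) ≤ M for all t ∈ [0, T₀/ε²]. -/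
open Set

/-- Gronwall-type argument on the long time interval [0, T₀/ε²]: for `C, T₀ > 0` and
`E₀ ≥ 0` there are `M > 0` and `ε₀ ∈ (0,1]` such that for every `ε ∈ (0,ε₀)` and every
continuously differentiable `E : [0,T₀/ε²] → [0,∞)` with `E(0) ≤ E₀` and
`E′(t) ≤ C·ε²·(E(t) + ε^{1/2}·E(t)^{3/2} + 1)` on `[0,T₀/ε²]`, one has `E(t) ≤ M` on
`[0,T₀/ε²]`. -/
theorem gronwall_long_time (C T₀ E₀ : ℝ) (hC : 0 < C) (hT₀ : 0 < T₀) (hE₀ : 0 ≤ E₀) :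
    ∃ M > (0 : ℝ), ∃ ε₀ : ℝ, 0 < ε₀ ∧ ε₀ ≤ 1 ∧
      ∀ ε : ℝ, 0 < ε → ε < ε₀ →
      ∀ E E' : ℝ → ℝ,
        (∀ t ∈ Icc (0 : ℝ) (T₀ / ε ^ 2), HasDerivAt E (E' t) t) →
        ContinuousOn E' (Icc (0 : ℝ) (T₀ / ε ^ 2)) →
        (∀ t ∈ Icc (0 : ℝ) (T₀ / ε ^ 2), 0 ≤ E t) →
        E 0 ≤ E₀ →
        (∀ t ∈ Icc (0 : ℝ) (T₀ / ε ^ 2),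
          E' t ≤ C * ε ^ 2 * (E t + Real.sqrt ε * E t ^ (3 / 2 : ℝ) + 1)) →
        ∀ t ∈ Icc (0 : ℝ) (T₀ / ε ^ 2), E t ≤ M := by
  set M : ℝ := (E₀ + 1) * Real.exp (2 * C * T₀) with hM
  have hexp1 : (1 : ℝ) ≤ Real.exp (2 * C * T₀) := by
    rw [Real.one_le_exp_iff]; positivity
  have hE₀M : E₀ + 1 ≤ M := by
    nlinarith [hexp1]
  have hMpos : 0 < M := by positivity
  refine ⟨M, hMpos, min 1 (1 / M), lt_min one_pos (by positivity), min_le_left _ _,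
    ?_⟩
  intro ε hε hεε₀ E E' hderiv hE'cont hEnn hE0 hbound
  set T : ℝ := T₀ / ε ^ 2 with hT
  have hTpos : 0 < T := by positivity
  have hεM : ε * M < 1 := by
    have h1 : ε < 1 / M := lt_of_lt_of_le hεε₀ (min_le_right _ _)
    calc ε * M < (1 / M) * M := by
          exact mul_lt_mul_of_pos_right h1 hMpos
      _ = 1 := by field_simp
  have hEcont : ContinuousOn E (Icc 0 T) := fun t ht =>
    (hderiv t ht).continuousAt.continuousWithinAt
  -- proceed by contradiction
  by_contra h
  push_neg at h
  obtain ⟨t₂, ht₂, hMt₂⟩ := h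
  set S : Set ℝ := Icc 0 T ∩ {t | M ≤ E t} with hS
  have hSclosed : IsClosed S :=
    hEcont.preimage_isClosed_of_isClosed isClosed_Icc isClosed_Ici
  have hSne : S.Nonempty := ⟨t₂, ht₂, hMt₂.le⟩
  have hSbdd : BddBelow S := ⟨0, fun x hx => hx.1.1⟩
  set t₁ : ℝ := sInf S with ht₁def
  have ht₁S : t₁ ∈ S := hSclosed.csInf_mem hSne hSbdd
  have ht₁Icc : t₁ ∈ Icc (0:ℝ) T := ht₁S.1
  have ht₁M : M ≤ E t₁ := ht₁S.2
  -- on [0, t₁) we have E < M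
  have hlt : ∀ x ∈ Ico (0:ℝ) t₁, E x < M := by
    intro x hx
    by_contra hge
    push_neg at hge
    have hxS : x ∈ S := ⟨⟨hx.1, hx.2.le.trans ht₁Icc.2⟩, hge⟩
    exact absurd (csInf_le hSbdd hxS) (not_le.mpr hx.2)
  -- linear bound on the derivative on [0, t₁)
  set K : ℝ := 2 * C * ε ^ 2 with hK
  have hKpos : 0 < K := by positivity
  have hlin : ∀ x ∈ Ico (0:ℝ) t₁, E' x ≤ K * E x + K := by
    intro x hx
    have hxIcc : x ∈ Icc (0:ℝ) T := ⟨hx.1, hx.2.le.trans ht₁Icc.2⟩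
    have hEx : 0 ≤ E x := hEnn x hxIcc
    have hExM : E x < M := hlt x hx
    -- √ε * (E x)^(3/2) ≤ E x
    have hcube : Real.sqrt ε * E x ^ (3 / 2 : ℝ) ≤ E x := by
      have h32 : E x ^ (3 / 2 : ℝ) = E x ^ (1 / 2 : ℝ) * E x := by
        rw [show (3 / 2 : ℝ) = 1 / 2 + 1 by norm_num,
          Real.rpow_add' hEx (by norm_num), Real.rpow_one]
      rw [h32, ← Real.sqrt_eq_rpow, ← mul_assoc, ← Real.sqrt_mul hε.le]
      have h1 : Real.sqrt (ε * E x) ≤ 1 := by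
        rw [show (1:ℝ) = Real.sqrt 1 by simp]
        apply Real.sqrt_le_sqrt
        nlinarith
      nlinarith [Real.sqrt_nonneg (ε * E x)]
    have := hbound x hxIcc
    calc E' x ≤ C * ε ^ 2 * (E x + Real.sqrt ε * E x ^ (3 / 2 : ℝ) + 1) := this
      _ ≤ C * ε ^ 2 * (E x + E x + 1) := by
          apply mul_le_mul_of_nonneg_left _ (by positivity)
          linarith
      _ ≤ K * E x + K := by rw [hK]; nlinarith
  -- Gronwall on [0, t₁]
  have hgron := le_gronwallBound_of_liminf_deriv_right_le
    (f := E) (f' := E') (δ := E₀) (K := K) (ε := K) (a := 0) (b := t₁)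
    (hEcont.mono (Icc_subset_Icc le_rfl ht₁Icc.2))
    (fun x hx r hr => by
      have hxIcc : x ∈ Icc (0:ℝ) T := ⟨hx.1, hx.2.le.trans ht₁Icc.2⟩
      have := ((hderiv x hxIcc).hasDerivWithinAt (s := Ici x)).liminf_right_slope_le hr
      refine this.mono fun z hz => ?_
      rwa [slope_def_field, div_eq_inv_mul] at hz)
    hE0 hlin t₁ ⟨ht₁Icc.1, le_rfl⟩
  rw [sub_zero, gronwallBound_of_K_ne_0 hKpos.ne'] at hgron
  have hKt : K * t₁ ≤ 2 * C * T₀ := by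
    have h1 : t₁ ≤ T := ht₁Icc.2
    have : K * t₁ ≤ K * T := mul_le_mul_of_nonneg_left h1 hKpos.le
    calc K * t₁ ≤ K * T := this
      _ = 2 * C * T₀ := by
          rw [hK, hT]; field_simp
  have hexple : Real.exp (K * t₁) ≤ Real.exp (2 * C * T₀) := Real.exp_le_exp.mpr hKt
  have hexppos : 0 < Real.exp (K * t₁) := Real.exp_pos _
  have : E t₁ ≤ M - 1 := by
    have hKK : K / K = 1 := div_self hKpos.ne'
    rw [hKK] at hgron
    calc E t₁ ≤ E₀ * Real.exp (K * t₁) + 1 * (Real.exp (K * t₁) - 1) := hgron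
      _ = (E₀ + 1) * Real.exp (K * t₁) - 1 := by ring
      _ ≤ (E₀ + 1) * Real.exp (2 * C * T₀) - 1 := by nlinarith
      _ = M - 1 := by rw [hM]
  linarith
end
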